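/- For natural numbers n, a, b with a ≤ n, b ≤ n, the sum over k from 0 to n of C(a,k)·C(b,n-k)·H(k)·H(n-k) equals C(a+b,n)·(H2(n) - H2(a+b) + (H(n) - H(a+b) + H(a))·(H(n) - H(a+b) + H(b))), where H and H2 are the harmonic numbers of order 1 and 2. -/

import Mathlib

/-!
Write `C(m, k) * H k = C(m, k) * H m - ∑_{i + j + 1 = m} C(i, k) / (j + 1)`. Substituting this for
both harmonic factors splits the sum into four pieces; Vandermonde's identity turns each of them
into a convolution of binomial coefficients with the harmonic kernel `1 / (j + 1)`, and these
convolutions have closed forms because both sides satisfy Pascal's recurrence in `(k, m)` and agree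
on the boundary. Since `a, b ≤ n`, the truncated convolutions that occur coincide with full ones:
the extra terms carry a factor `C(i, n) = 0` with `i < n`.
-/

noncomputable def H (m : ℕ) : ℚ := ∑ j ∈ Finset.range m, (1 : ℚ) / (j + 1)

noncomputable def H2 (m : ℕ) : ℚ := ∑ j ∈ Finset.range m, (1 : ℚ) / ((j : ℚ) + 1) ^ 2

open Finset

@[simp] lemma H_zero : H 0 = 0 := by simp [H]

@[simp] lemma H2_zero : H2 0 = 0 := by simp [H2]

lemma H_succ (m : ℕ) : H (m + 1) = H m + 1 / (m + 1) := by
  simp [H, sum_range_succ]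

lemma H2_succ (m : ℕ) : H2 (m + 1) = H2 m + (1 / (m + 1)) ^ 2 := by
  simp [H2, sum_range_succ]

lemma cast_choose_succ_succ (m k : ℕ) :
    ((m + 1).choose (k + 1) : ℚ) = m.choose (k + 1) + m.choose k := by
  exact_mod_cast (Nat.choose_succ_succ' m k).trans (add_comm _ _)

lemma cast_choose_div_succ (m k : ℕ) :
    (m.choose k : ℚ) / (k + 1) = (m + 1).choose (k + 1) / (m + 1) := by
  rw [div_eq_div_iff (by positivity) (by positivity), mul_comm]
  exact_mod_cast Nat.add_one_mul_choose_eq m k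

lemma sum_range_choose_mul_choose (x y n : ℕ) :
    ∑ k ∈ range (n + 1), (x.choose k : ℚ) * y.choose (n - k) = (x + y).choose n := by
  rw [Nat.add_choose_eq, Nat.sum_antidiagonal_eq_sum_range_succ_mk]
  push_cast
  rfl

-- `harmonicConv c m = ∑_{i + j + 1 = m} c i / (j + 1)`
noncomputable def harmonicConv (c : ℕ → ℚ) (m : ℕ) : ℚ :=
  ∑ j ∈ range m, c (m - 1 - j) / (j + 1)

@[simp] lemma harmonicConv_zero (c : ℕ → ℚ) : harmonicConv c 0 = 0 := by
  simp [harmonicConv]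

lemma harmonicConv_succ (c : ℕ → ℚ) (m : ℕ) :
    harmonicConv c (m + 1) = harmonicConv (fun i => c (i + 1)) m + c 0 / (m + 1) := by
  rw [harmonicConv, sum_range_succ, Nat.add_sub_cancel, Nat.sub_self]
  congr 1
  refine sum_congr rfl fun j hj => ?_
  rw [show m - j = m - 1 - j + 1 by have := mem_range.mp hj; omega]

lemma harmonicConv_congr {c d : ℕ → ℚ} {m : ℕ} (h : ∀ i < m, c i = d i) :
    harmonicConv c m = harmonicConv d m :=
  sum_congr rfl fun j hj => by rw [h _ (by have := mem_range.mp hj; omega)]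

lemma harmonicConv_add (c d : ℕ → ℚ) (m : ℕ) :
    harmonicConv (c + d) m = harmonicConv c m + harmonicConv d m := by
  simp only [harmonicConv, Pi.add_apply, add_div, sum_add_distrib]

lemma sum_mul_harmonicConv {ι : Type*} (s : Finset ι) (u : ι → ℚ) (v : ι → ℕ → ℚ) (m : ℕ) :
    ∑ k ∈ s, u k * harmonicConv (v k) m =
      harmonicConv (fun i => ∑ k ∈ s, u k * v k i) m := by
  simp only [harmonicConv, mul_sum, sum_div, mul_div_assoc]
  exact sum_comm

lemma harmonicConv_add_left {c : ℕ → ℚ} {a : ℕ} (hc : ∀ i < a, c i = 0) (b : ℕ) :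
    harmonicConv (fun i => c (a + i)) b = harmonicConv c (a + b) := by
  rw [harmonicConv, harmonicConv, add_comm a b, sum_range_add, add_eq_left.mpr]
  · refine sum_congr rfl fun j hj => ?_
    rw [show a + (b - 1 - j) = b + a - 1 - j by have := mem_range.mp hj; omega]
  · refine sum_eq_zero fun i hi => ?_
    rw [hc _ (by have := mem_range.mp hi; omega), zero_div]

lemma harmonicConv_one (m : ℕ) : harmonicConv (fun _ => 1) m = H m := rfl

lemma harmonicConv_inv_succ (m : ℕ) :
    harmonicConv (fun i => 1 / (i + 1)) m = 2 * H m / (m + 1) := by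
  have hsplit : ∀ j ∈ range m, (1 / (((m - 1 - j : ℕ) : ℚ) + 1)) / ((j : ℚ) + 1) =
      (1 / (((m - 1 - j : ℕ) : ℚ) + 1) + 1 / ((j : ℚ) + 1)) / (m + 1) := by
    intro j hj
    have hm : ((m - 1 - j : ℕ) : ℚ) + 1 + (j + 1) = m + 1 := by
      have := mem_range.mp hj
      exact_mod_cast (show m - 1 - j + 1 + (j + 1) = m + 1 by omega)
    field_simp
    linarith
  rw [harmonicConv, sum_congr rfl hsplit, ← sum_div, sum_add_distrib,
    sum_range_reflect (fun j => 1 / ((j : ℚ) + 1)), ← H]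
  ring

lemma harmonicConv_H (m : ℕ) : harmonicConv H m = H m ^ 2 - H2 m := by
  induction m with
  | zero => simp
  | succ m ih =>
    have hshift : (fun i => H (i + 1)) = H + fun i : ℕ => 1 / ((i : ℚ) + 1) := by
      funext i
      simp [H_succ]
    rw [harmonicConv_succ, hshift, harmonicConv_add, ih, harmonicConv_inv_succ, H_succ, H2_succ,
      H_zero]
    field_simp
    ring

lemma pascal_ext {f g : ℕ → ℕ → ℚ}
    (hf : ∀ k m, f (k + 1) (m + 1) = f (k + 1) m + f k m)
    (hg : ∀ k m, g (k + 1) (m + 1) = g (k + 1) m + g k m)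
    (hcol : ∀ m, f 0 m = g 0 m) (hrow : ∀ k, f k 0 = g k 0) (k m : ℕ) : f k m = g k m := by
  induction m generalizing k with
  | zero => exact hrow k
  | succ m ih =>
    cases k with
    | zero => exact hcol _
    | succ k => rw [hf, hg, ih, ih]

lemma harmonicConv_pascal {f : ℕ → ℕ → ℚ}
    (hf : ∀ k m, f (k + 1) (m + 1) = f (k + 1) m + f k m) (hf0 : ∀ k, f (k + 1) 0 = 0)
    (k m : ℕ) :
    harmonicConv (f (k + 1)) (m + 1) = harmonicConv (f (k + 1)) m + harmonicConv (f k) m := by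
  have hshift : (fun i => f (k + 1) (i + 1)) = f (k + 1) + f k := funext (hf k)
  rw [harmonicConv_succ, hshift, harmonicConv_add, hf0, zero_div, add_zero]

lemma choose_mul_H_sub_pascal (k m : ℕ) :
    ((m + 1).choose (k + 1) : ℚ) * (H (m + 1) - H (k + 1)) =
      m.choose (k + 1) * (H m - H (k + 1)) + m.choose k * (H m - H k) := by
  have hkey := cast_choose_div_succ m k
  rw [cast_choose_succ_succ] at hkey
  rw [cast_choose_succ_succ, H_succ, H_succ]
  linear_combination -hkey

lemma choose_mul_H2_pascal (k m : ℕ) :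
    ((m + 1).choose (k + 1) : ℚ) * (H2 (k + 1) - H2 (m + 1) + (H (m + 1) - H (k + 1)) ^ 2) =
      m.choose (k + 1) * (H2 (k + 1) - H2 m + (H m - H (k + 1)) ^ 2) +
        m.choose k * (H2 k - H2 m + (H m - H k) ^ 2) := by
  have hkey := cast_choose_div_succ m k
  rw [cast_choose_succ_succ] at hkey
  rw [cast_choose_succ_succ, H_succ, H_succ, H2_succ, H2_succ]
  linear_combination -2 * (H m - H k - 1 / (k + 1)) * hkey

lemma harmonicConv_choose (k m : ℕ) :
    harmonicConv (fun i => (i.choose k : ℚ)) m = m.choose k * (H m - H k) := by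
  refine pascal_ext (f := fun k m => harmonicConv (fun i => (i.choose k : ℚ)) m)
    (g := fun k m => m.choose k * (H m - H k)) ?_ choose_mul_H_sub_pascal ?_ ?_ k m
  · exact harmonicConv_pascal (f := fun k i => (i.choose k : ℚ))
      (fun k m => cast_choose_succ_succ m k) fun k => by simp
  · intro m
    simp [harmonicConv_one]
  · intro k
    cases k <;> simp

lemma harmonicConv_choose_mul_H_sub (k m : ℕ) :
    harmonicConv (fun i => i.choose k * (H i - H k)) m =
      m.choose k * (H2 k - H2 m + (H m - H k) ^ 2) := by
  refine pascal_ext (f := fun k m => harmonicConv (fun i => i.choose k * (H i - H k)) m)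
    (g := fun k m => m.choose k * (H2 k - H2 m + (H m - H k) ^ 2)) ?_ choose_mul_H2_pascal ?_ ?_ k m
  · exact harmonicConv_pascal (f := fun k i => i.choose k * (H i - H k))
      choose_mul_H_sub_pascal fun k => by simp
  · intro m
    simp only [Nat.choose_zero_right, Nat.cast_one, H_zero, sub_zero, one_mul, harmonicConv_H,
      H2_zero, zero_sub]
    ring
  · intro k
    cases k <;> simp

lemma sum_choose_mul_harmonicConv_choose {x n : ℕ} (hx : x ≤ n) (m : ℕ) :
    ∑ k ∈ range (n + 1),
        (x.choose k : ℚ) * harmonicConv (fun i => (i.choose (n - k) : ℚ)) m =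
      (x + m).choose n * (H (x + m) - H n) := by
  have hvanish : ∀ i < x, (i.choose n : ℚ) = 0 := fun i hi => by
    rw [Nat.choose_eq_zero_of_lt (hi.trans_le hx), Nat.cast_zero]
  simp only [sum_mul_harmonicConv, sum_range_choose_mul_choose]
  rw [harmonicConv_add_left (c := fun i => (i.choose n : ℚ)) hvanish, harmonicConv_choose]

lemma sum_harmonicConv_choose_mul_choose {y n : ℕ} (hy : y ≤ n) (m : ℕ) :
    ∑ k ∈ range (n + 1), harmonicConv (fun i => (i.choose k : ℚ)) m * y.choose (n - k) =
      (y + m).choose n * (H (y + m) - H n) := by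
  have hvanish : ∀ i < y, (i.choose n : ℚ) = 0 := fun i hi => by
    rw [Nat.choose_eq_zero_of_lt (hi.trans_le hy), Nat.cast_zero]
  have hvandermonde : (fun i => ∑ k ∈ range (n + 1), (y.choose (n - k) : ℚ) * i.choose k) =
      fun i => ((y + i).choose n : ℚ) := funext fun i => by
    rw [add_comm y i, ← sum_range_choose_mul_choose]
    exact sum_congr rfl fun k _ => mul_comm _ _
  simp only [mul_comm (harmonicConv _ m), sum_mul_harmonicConv]
  rw [hvandermonde, harmonicConv_add_left (c := fun i => (i.choose n : ℚ)) hvanish,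
    harmonicConv_choose]

lemma sum_harmonicConv_choose_mul_harmonicConv_choose {a b n : ℕ} (ha : a ≤ n) (hb : b ≤ n) :
    ∑ k ∈ range (n + 1), harmonicConv (fun i => (i.choose k : ℚ)) a *
        harmonicConv (fun i => (i.choose (n - k) : ℚ)) b =
      (b + a).choose n * (H2 n - H2 (b + a) + (H (b + a) - H n) ^ 2) := by
  have hvanish : ∀ i < b, (i.choose n : ℚ) * (H i - H n) = 0 := fun i hi => by
    rw [Nat.choose_eq_zero_of_lt (hi.trans_le hb), Nat.cast_zero, zero_mul]
  simp only [mul_comm (harmonicConv _ a), sum_mul_harmonicConv]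
  rw [harmonicConv_congr (d := fun i => ((b + i).choose n : ℚ) * (H (b + i) - H n)) fun i hi => by
      rw [add_comm b i, ← sum_choose_mul_harmonicConv_choose (by omega)]
      exact sum_congr rfl fun k _ => mul_comm _ _,
    harmonicConv_add_left (c := fun i => (i.choose n : ℚ) * (H i - H n)) hvanish,
    harmonicConv_choose_mul_H_sub]

theorem stmt_10 (n a b : ℕ) (ha : a ≤ n) (hb : b ≤ n) :
    ∑ k ∈ Finset.range (n + 1),
      (a.choose k : ℚ) * b.choose (n - k) * H k * H (n - k) =
    ((a + b).choose n : ℚ) *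
      (H2 n - H2 (a + b) + (H n - H (a + b) + H a) * (H n - H (a + b) + H b)) := by
  set A := fun k => harmonicConv (fun i => (i.choose k : ℚ)) a
  set B := fun k => harmonicConv (fun i => (i.choose k : ℚ)) b
  calc ∑ k ∈ range (n + 1), (a.choose k : ℚ) * b.choose (n - k) * H k * H (n - k)
      = ∑ k ∈ range (n + 1), (H a * H b * ((a.choose k : ℚ) * b.choose (n - k))
          - H a * ((a.choose k : ℚ) * B (n - k)) - H b * (A k * b.choose (n - k))
          + A k * B (n - k)) := by
        refine sum_congr rfl fun k _ => ?_
        simp only [A, B, harmonicConv_choose]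
        ring
    _ = H a * H b * ∑ k ∈ range (n + 1), (a.choose k : ℚ) * b.choose (n - k)
          - H a * ∑ k ∈ range (n + 1), (a.choose k : ℚ) * B (n - k)
          - H b * ∑ k ∈ range (n + 1), A k * b.choose (n - k)
          + ∑ k ∈ range (n + 1), A k * B (n - k) := by
        simp only [sum_add_distrib, sum_sub_distrib, mul_sum]
    _ = _ := by
      simp only [A, B]
      rw [sum_range_choose_mul_choose, sum_choose_mul_harmonicConv_choose ha,
        sum_harmonicConv_choose_mul_choose hb,
        sum_harmonicConv_choose_mul_harmonicConv_choose ha hb, add_comm b a]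
      ring
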